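/- Let h be harmonic on a domain D in ℂ. Then: (1) if h attains a local maximum at some point of D, then h is constant on D; (2) if for every boundary point ζ of D (the boundary taken in the one-point compactification ℂ∞ = ℂ ∪ {∞}) one has limsup_{z→ζ, z∈D} h(z) ≤ 0, then h ≤ 0 on D. -/

import Mathlib

open MeasureTheory Complex Filter Topology
open scoped ENNReal

noncomputable def posE (x : EReal) : ℝ≥0∞ := if x = ⊤ then ⊤ else ENNReal.ofReal x.toReal

noncomputable def eInt {X : Type*} [MeasurableSpace X] (μ : Measure X) (f : X → EReal) : EReal :=
  ENNReal.toEReal (∫⁻ x, posE (f x) ∂μ) - ENNReal.toEReal (∫⁻ x, posE (-(f x)) ∂μ)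

def Subharmonic (u : ℂ → EReal) (D : Set ℂ) : Prop :=
  UpperSemicontinuousOn u D ∧
    ∀ w ∈ D, ∃ ρ > (0:ℝ), ∀ r : ℝ, 0 ≤ r → r < ρ →
      ∀ g : ℝ → ℝ,
        (∀ t ∈ Set.Icc (0:ℝ) (2*Real.pi),
          u (w + (r : ℂ) * Complex.exp (t * Complex.I)) ≤ (g t : EReal)) →
        IntervalIntegrable g volume 0 (2*Real.pi) →
        u w ≤ (((1/(2*Real.pi)) * ∫ t in (0:ℝ)..(2*Real.pi), g t : ℝ) : EReal)

def HarmonicOnC (h : ℂ → ℝ) (U : Set ℂ) : Prop :=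
  ContDiffOn ℝ 2 h U ∧
    ∀ z ∈ U, iteratedFDeriv ℝ 2 h z ![1, 1] + iteratedFDeriv ℝ 2 h z ![Complex.I, Complex.I] = 0

def HarmonicOnRn {n : ℕ} (h : EuclideanSpace ℝ (Fin n) → ℝ)
    (U : Set (EuclideanSpace ℝ (Fin n))) : Prop :=
  ContDiffOn ℝ 2 h U ∧
    ∀ x ∈ U, ∑ i : Fin n,
      iteratedFDeriv ℝ 2 h x ![EuclideanSpace.single i 1, EuclideanSpace.single i 1] = 0

/-- Boundary of `D` taken in the one-point compactification of `ℂ`. -/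
def cbdry (D : Set ℂ) : Set (OnePoint ℂ) :=
  frontier ((fun z : ℂ => (z : OnePoint ℂ)) '' D)

/-- The filter of approach to `ζ ∈ ∂D ⊆ ℂ∞` through points of `D`. -/
noncomputable def bfilter (D : Set ℂ) (ζ : OnePoint ℂ) : Filter ℂ :=
  Filter.comap (fun z : ℂ => (z : OnePoint ℂ)) (nhds ζ) ⊓ Filter.principal D

noncomputable def elog (x : ℝ) : EReal :=
  if x = 0 then (⊥ : EReal) else ((Real.log x : ℝ) : EReal)

noncomputable def logPotential (μ : Measure ℂ) (z : ℂ) : EReal :=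
  eInt μ (fun w => elog (‖w - z‖))

noncomputable def lapl (φ : ℂ → ℝ) (z : ℂ) : ℝ :=
  iteratedFDeriv ℝ 2 φ z ![1, 1] + iteratedFDeriv ℝ 2 φ z ![Complex.I, Complex.I]

noncomputable def energy (μ : Measure ℂ) : EReal :=
  - eInt μ (fun z => eInt μ (fun w => elog (‖z - w‖)))

noncomputable def smoothConv (u : ℂ → EReal) (χ : ℂ → ℝ) (r : ℝ) (z : ℂ) : EReal :=
  eInt volume (fun w => (((r ^ 2)⁻¹ * χ (w / (r : ℂ)) : ℝ) : EReal) * u (z - w))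

/-!
Near each point a harmonic `h` is the real part of a holomorphic `F`, so a local maximum of `h` is
one of `‖exp ∘ F‖`; the maximum modulus principle makes `h` locally constant, and since `h` is
real analytic it is constant on the domain. If `h` took a value `h z > 0` while the boundary
limsups are `≤ 0`, the closure in `ℂ∞` of `{h ≥ h z}` would miss `∂D`, so this set sits in a
compact subset of `D` and `h` attains a global maximum there; then `h` is constant and positive,
which contradicts the bound at any point of the nonempty boundary `∂D`.
-/

open InnerProductSpace Metric Set

theorem HarmonicOnC.harmonicOnNhd {h : ℂ → ℝ} {D : Set ℂ} (hD : IsOpen D)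
    (hh : HarmonicOnC h D) : HarmonicOnNhd h D := by
  intro z hz
  refine ⟨hh.1.contDiffAt (hD.mem_nhds hz), ?_⟩
  filter_upwards [hD.mem_nhds hz] with w hw
  rw [laplacian_eq_iteratedFDeriv_complexPlane]
  exact hh.2 w hw

theorem InnerProductSpace.HarmonicAt.eventually_eq_of_isLocalMax {f : ℂ → ℝ} {x : ℂ}
    (hf : HarmonicAt f x) (hmax : IsLocalMax f x) : ∀ᶠ z in 𝓝 x, f z = f x := by
  obtain ⟨ε, hε, hball⟩ := Metric.isOpen_iff.1 (isOpen_setOfPred_harmonicAt f) x hf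
  obtain ⟨F, hF, hre⟩ :=
    HarmonicOnNhd.exists_analyticOnNhd_ball_re_eq (f := f) fun _ hy ↦ hball hy
  have hre_ev : ∀ᶠ z in 𝓝 x, (F z).re = f z := eventually_of_mem (ball_mem_nhds x hε) hre
  have hd : ∀ᶠ z in 𝓝 x, DifferentiableAt ℂ (fun z ↦ cexp (F z)) z := by
    filter_upwards [ball_mem_nhds x hε] with z hz
    exact (hF z hz).differentiableAt.cexp
  have hnorm : IsLocalMax (norm ∘ fun z ↦ cexp (F z)) x := by
    filter_upwards [hmax, hre_ev] with z hz hzre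
    simp only [Function.comp_apply, Complex.norm_exp, hzre, hre_ev.self_of_nhds]
    exact Real.exp_le_exp.2 hz
  filter_upwards [Complex.eventually_eq_of_isLocalMax_norm hd hnorm, hre_ev] with z hz hzre
  simpa only [Complex.norm_exp, Real.exp_eq_exp, hzre, hre_ev.self_of_nhds] using
    congrArg norm hz

theorem InnerProductSpace.HarmonicOnNhd.eqOn_of_isLocalMaxOn {f : ℂ → ℝ} {D : Set ℂ}
    (hf : HarmonicOnNhd f D) (hD : IsOpen D) (hconn : IsPreconnected D) {z₀ : ℂ} (hz₀ : z₀ ∈ D)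
    (hmax : IsLocalMaxOn f D z₀) : EqOn f (fun _ ↦ f z₀) D :=
  AnalyticOnNhd.eqOn_of_preconnected_of_eventuallyEq (fun z hz ↦ HarmonicAt.analyticAt (hf z hz))
    analyticOnNhd_const hconn hz₀
    ((hf z₀ hz₀).eventually_eq_of_isLocalMax (hmax.isLocalMax (hD.mem_nhds hz₀)))

theorem bfilter_inf_principal_neBot {D T : Set ℂ} (hTD : T ⊆ D) {ζ : OnePoint ℂ}
    (hζ : ζ ∈ closure (((↑) : ℂ → OnePoint ℂ) '' T)) : (bfilter D ζ ⊓ 𝓟 T).NeBot := by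
  have hT : (comap ((↑) : ℂ → OnePoint ℂ) (𝓝 ζ ⊓ 𝓟 ((↑) '' T))).NeBot :=
    (mem_closure_iff_clusterPt.1 hζ).comap_of_range_mem
      (mem_inf_of_right (mem_principal.2 (image_subset_range _ _)))
  rw [comap_inf, comap_principal, preimage_image_eq _ OnePoint.coe_injective] at hT
  rwa [bfilter, inf_assoc, inf_principal, inter_eq_self_of_subset_right hTD]

theorem le_limsup_bfilter {D T : Set ℂ} (hTD : T ⊆ D) {u : ℂ → EReal} {a : EReal}
    (hu : ∀ w ∈ T, a ≤ u w) {ζ : OnePoint ℂ} (hζ : ζ ∈ closure (((↑) : ℂ → OnePoint ℂ) '' T)) :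
    a ≤ limsup u (bfilter D ζ) := by
  have := bfilter_inf_principal_neBot hTD hζ
  refine le_limsup_of_frequently_le ?_ (isBoundedUnder_of ⟨⊤, fun _ ↦ le_top⟩)
  rw [frequently_iff_neBot]
  exact neBot_of_le (inf_le_inf_left _ (principal_mono.2 hu))

theorem cbdry_nonempty {D : Set ℂ} (hD : D.Nonempty) : (cbdry D).Nonempty := by
  rw [nonempty_iff_ne_empty, cbdry, Ne, ← isClopen_iff_frontier_eq_empty]
  intro hclopen
  rcases isClopen_iff.1 hclopen with h | h
  · exact (hD.image _).ne_empty h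
  · exact OnePoint.infty_notMem_image_coe (h ▸ mem_univ OnePoint.infty)

theorem ContinuousOn.exists_isMaxOn_of_limsup_bfilter_le {f : ℂ → ℝ} {D : Set ℂ}
    (hf : ContinuousOn f D) {a : ℝ}
    (hbd : ∀ ζ ∈ cbdry D, limsup (fun z ↦ (f z : EReal)) (bfilter D ζ) ≤ a) {z : ℂ} (hz : z ∈ D)
    (ha : a < f z) : ∃ z₁ ∈ D, IsMaxOn f D z₁ := by
  set S := {w ∈ D | f z ≤ f w}
  have hS : closure (((↑) : ℂ → OnePoint ℂ) '' S) ⊆ (↑) '' D := by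
    intro ζ hζ
    rcases closure_eq_self_union_frontier (((↑) : ℂ → OnePoint ℂ) '' D) ▸
      closure_mono (image_mono (sep_subset D _)) hζ with hζD | hζbd
    · exact hζD
    · have := (le_limsup_bfilter (sep_subset D _) (fun w hw ↦ EReal.coe_le_coe hw.2) hζ).trans
        (hbd ζ hζbd)
      exact absurd (EReal.coe_le_coe_iff.1 this) (not_le.2 ha)
  set T := ((↑) : ℂ → OnePoint ℂ) ⁻¹' closure ((↑) '' S)
  have hTD : T ⊆ D :=
    (preimage_mono hS).trans (preimage_image_eq D OnePoint.coe_injective).le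
  have hT : IsCompact T := by
    rw [OnePoint.isOpenEmbedding_coe.isEmbedding.isCompact_iff,
      image_preimage_eq_of_subset (hS.trans (image_subset_range _ _))]
    exact isClosed_closure.isCompact
  have hST : S ⊆ T := fun w hw ↦ subset_closure (mem_image_of_mem _ hw)
  obtain ⟨z₁, hz₁, hmax⟩ := hT.exists_isMaxOn ⟨z, hST ⟨hz, le_rfl⟩⟩ (hf.mono hTD)
  refine ⟨z₁, hTD hz₁, fun w hw ↦ ?_⟩
  by_cases hw' : f z ≤ f w
  · exact hmax (hST ⟨hw, hw'⟩)
  · exact (not_le.1 hw').le.trans (hmax (hST ⟨hz, le_rfl⟩))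

theorem stmt3 (D : Set ℂ) (hD : IsOpen D) (hconn : IsConnected D)
    (h : ℂ → ℝ) (hh : HarmonicOnC h D) :
    ((∃ z₀ ∈ D, IsLocalMaxOn h D z₀) → ∀ z ∈ D, ∀ w ∈ D, h z = h w) ∧
    ((∀ ζ ∈ cbdry D, Filter.limsup (fun z => (h z : EReal)) (bfilter D ζ) ≤ 0) →
      ∀ z ∈ D, h z ≤ 0) := by
  have hH := hh.harmonicOnNhd hD
  have hconst : (∃ z₀ ∈ D, IsLocalMaxOn h D z₀) → ∀ z ∈ D, ∀ w ∈ D, h z = h w := by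
    rintro ⟨z₀, hz₀, hmax⟩ z hz w hw
    have := hH.eqOn_of_isLocalMaxOn hD hconn.isPreconnected hz₀ hmax
    rw [this hz, this hw]
  refine ⟨hconst, fun hbd z hz ↦ not_lt.1 fun hpos ↦ ?_⟩
  obtain ⟨z₁, hz₁, hmax⟩ :=
    hH.continuousOn.exists_isMaxOn_of_limsup_bfilter_le (a := 0) (mod_cast hbd) hz hpos
  obtain ⟨ζ, hζ⟩ := cbdry_nonempty hconn.nonempty
  have hh_eq := hconst ⟨z₁, hz₁, hmax.localize⟩ z₁ hz₁
  have hζ₁ : (h z₁ : EReal) ≤ 0 :=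
    (le_limsup_bfilter subset_rfl (fun w hw ↦ EReal.coe_le_coe (hh_eq w hw).le)
      (frontier_subset_closure hζ)).trans (hbd ζ hζ)
  exact (hpos.trans_le (hmax hz)).not_ge (mod_cast hζ₁)
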